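/- (Theorem 1, distribution shift.) Let Φ_x, Φ_u be block lower triangular satisfying (I − Z𝒜̂)Φ_x − Zℬ̂Φ_u = I, Φ = [Φ_x; Φ_u], ΔA = Â − A, ΔB = B̂ − B, Δℳ = [blkdiag_{T+1}(ΔA) blkdiag_{T+1}(ΔB)], R_Φ = (I + ΦZΔℳ)⁻¹. Fix x₀ ∈ ℝ^n and let P_w be a probability measure on ℝ^{(T+1)n} with finite first moment, supported on { w : first n coordinates of w equal x₀ }. Given data (x^i, u^i), i = 1,…,N, define w^i = x^i − Z blkdiag_{T+1}(A) x^i − Z blkdiag_{T+1}(B) u^i and ŵ^i = x^i − Z𝒜̂x^i − Zℬ̂u^i, and assume the first n coordinates of each w^i equal x₀. Let P̂_pred = (1/N)Σ_i δ_{Φŵ^i} (empirical predictive distribution), P̄_w = (1/N)Σ_i δ_{w^i} (empirical disturbance distribution), and P_cl = (R_ΦΦ)#P_w (true closed-loop distribution). Then d_W(P̂_pred, P_cl) ≤ (1/N)Σ_{i=1}^N ‖R_Φ Φ Z Δℳ (Φŵ^i − [x^i; u^i])‖ + ‖R_Φ Φ Z‖ · d_W(P̄_w, P_w). -/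

import Mathlib

open MeasureTheory Matrix
open scoped ENNReal

/-- The ℓ¹-norm of a vector. -/
noncomputable def l1norm {ι : Type*} [Fintype ι] (v : ι → ℝ) : ℝ := ∑ i, |v i|

/-- The induced ℓ¹-norm of a matrix (maximum absolute column sum). -/
noncomputable def matL1 {ι κ : Type*} [Fintype ι] [Fintype κ] (M : Matrix ι κ ℝ) : ℝ :=
  ⨆ j, ∑ i, |M i j|

/-- The Wasserstein-1 distance (w.r.t. the ℓ¹-norm): infimum over couplings of the expected
ℓ¹-distance. -/
noncomputable def wass {ι : Type*} [Fintype ι] (P Q : Measure (ι → ℝ)) : ℝ :=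
  sInf { r | ∃ π : Measure ((ι → ℝ) × (ι → ℝ)),
    IsProbabilityMeasure π ∧ π.map Prod.fst = P ∧ π.map Prod.snd = Q ∧
    r = ∫ p, l1norm (p.1 - p.2) ∂π }

/-- The uniform empirical measure `(1/N) ∑ᵢ δ_{a i}`. -/
noncomputable def emp {ι : Type*} [Fintype ι] {N : ℕ} (a : Fin N → (ι → ℝ)) :
    Measure (ι → ℝ) :=
  (N : ℝ≥0∞)⁻¹ • ∑ i, Measure.dirac (a i)

/-- The block-downshift matrix `Z`, with `n × n` identity blocks on the first block
subdiagonal and zero blocks elsewhere. -/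
noncomputable def dshift (T n : ℕ) : Matrix (Fin (T+1) × Fin n) (Fin (T+1) × Fin n) ℝ :=
  fun p q => if (p.1 : ℕ) = (q.1 : ℕ) + 1 ∧ p.2 = q.2 then 1 else 0

/-- `blkdiag T M`: block-diagonal matrix with `T+1` copies of `M` on the diagonal. -/
noncomputable def blkdiag (T : ℕ) {n m : ℕ} (M : Matrix (Fin n) (Fin m) ℝ) :
    Matrix (Fin (T+1) × Fin n) (Fin (T+1) × Fin m) ℝ :=
  fun p q => if p.1 = q.1 then M p.2 q.2 else 0

/-- A block-partitioned matrix is block lower triangular: all blocks strictly above the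
block diagonal are zero. -/
def BlockLT {T n m : ℕ} (M : Matrix (Fin (T+1) × Fin m) (Fin (T+1) × Fin n) ℝ) : Prop :=
  ∀ p q, p.1 < q.1 → M p q = 0

/-!
Since `R_Φ (I + Φ Z Δℳ) = I` and `w^i = ŵ^i + Z Δℳ [x^i; u^i]`, for every disturbance trajectory `y`
`Φ ŵ^i - R_Φ Φ y = R_Φ Φ Z Δℳ (Φ ŵ^i - [x^i; u^i]) + R_Φ Φ (w^i - y)`.
When `y` starts at `x₀` like `w^i`, the vector `w^i - y` is `Z` applied to its own time shift, which
has the same ℓ¹-norm, so the last term is at most `‖R_Φ Φ Z‖ ‖w^i - y‖`. Any coupling of `P̄_w` and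
`P_w` disintegrates as `(1/N) ∑ᵢ δ_{w^i} ⊗ νᵢ`, and `(1/N) ∑ᵢ δ_{Φ ŵ^i} ⊗ (R_Φ Φ)#νᵢ` is then a
coupling of `P̂_pred` and `P_cl` whose cost is controlled by this pointwise estimate.
The inverse `R_Φ` exists because `Φ Z Δℳ` is strictly block lower triangular, hence nilpotent.
-/

section L1
variable {ι : Type*} [Fintype ι]

lemma l1norm_nonneg (v : ι → ℝ) : 0 ≤ l1norm v :=
  Finset.sum_nonneg fun _ _ => abs_nonneg _

lemma l1norm_add_le (v u : ι → ℝ) : l1norm (v + u) ≤ l1norm v + l1norm u := by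
  simp only [l1norm, ← Finset.sum_add_distrib]
  exact Finset.sum_le_sum fun i _ => abs_add_le _ _

lemma l1norm_sub_le (v u : ι → ℝ) : l1norm (v - u) ≤ l1norm v + l1norm u := by
  simp only [l1norm, ← Finset.sum_add_distrib]
  exact Finset.sum_le_sum fun i _ => abs_sub _ _

@[fun_prop]
lemma continuous_l1norm : Continuous (l1norm (ι := ι)) := by
  unfold l1norm; fun_prop

lemma integrable_l1norm_const_sub {μ : Measure (ι → ℝ)} [IsFiniteMeasure μ]
    (hμ : Integrable l1norm μ) (v : ι → ℝ) : Integrable (fun y => l1norm (v - y)) μ :=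
  ((integrable_const (l1norm v)).add hμ).mono' (by fun_prop)
    (.of_forall fun y => by
      rw [Real.norm_of_nonneg (l1norm_nonneg _)]; exact l1norm_sub_le v y)

end L1

section Operator
variable {ι κ : Type*} [Fintype ι] [Fintype κ]

lemma sum_abs_le_matL1 (M : Matrix ι κ ℝ) (j : κ) : ∑ i, |M i j| ≤ matL1 M :=
  le_ciSup (f := fun j => ∑ i, |M i j|) (Set.finite_range _).bddAbove j

lemma matL1_nonneg (M : Matrix ι κ ℝ) : 0 ≤ matL1 M :=
  Real.iSup_nonneg fun _ => Finset.sum_nonneg fun _ _ => abs_nonneg _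

lemma l1norm_mulVec_le (M : Matrix ι κ ℝ) (v : κ → ℝ) :
    l1norm (M *ᵥ v) ≤ matL1 M * l1norm v := by
  calc l1norm (M *ᵥ v) ≤ ∑ i, ∑ j, |M i j| * |v j| := by
        refine Finset.sum_le_sum fun i _ => (Finset.abs_sum_le_sum_abs _ _).trans_eq ?_
        simp only [abs_mul]
    _ = ∑ j, (∑ i, |M i j|) * |v j| := by rw [Finset.sum_comm]; simp only [Finset.sum_mul]
    _ ≤ ∑ j, matL1 M * |v j| := by gcongr with j; exact sum_abs_le_matL1 M j
    _ = matL1 M * l1norm v := by rw [l1norm, Finset.mul_sum]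

end Operator

section Shift
variable {T n : ℕ}

lemma dshift_apply_eq_ite (t : Fin (T+1)) (j : Fin n) (q : Fin (T+1) × Fin n) :
    dshift T n (t, j) q = if t ≠ 0 ∧ q = (t - 1, j) then 1 else 0 := by
  obtain ⟨s, k⟩ := q
  rw [dshift]
  by_cases ht : t = 0
  · simp [ht]
  · have hpos : 0 < (t : ℕ) := Fin.pos_iff_ne_zero.2 ht
    have hval : (t : ℕ) = ((t - 1 : Fin (T+1)) : ℕ) + 1 := by
      rw [Fin.coe_sub_one, if_neg ht]; omega
    simp only [hval, Prod.mk.injEq, ← Fin.ext_iff, eq_comm, Nat.add_right_cancel_iff]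
    simp [ht]

lemma dshift_mulVec_apply (y : Fin (T+1) × Fin n → ℝ) (t : Fin (T+1)) (j : Fin n) :
    (dshift T n *ᵥ y) (t, j) = if t = 0 then 0 else y (t - 1, j) := by
  simp only [mulVec, dotProduct, dshift_apply_eq_ite, ite_mul, one_mul, zero_mul]
  split_ifs with h <;> simp [h]

-- The shifted index `p.1 + 1` wraps around in `Fin (T+1)`; the wrapped entry is `v (0, _) = 0`.
lemma dshift_mulVec_shift (v : Fin (T+1) × Fin n → ℝ) (hv : ∀ j, v (0, j) = 0) :
    dshift T n *ᵥ (fun p => v (p.1 + 1, p.2)) = v := by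
  ext ⟨t, j⟩
  rw [dshift_mulVec_apply]
  split_ifs with h
  · rw [h, hv]
  · simp

lemma l1norm_comp_shift (v : Fin (T+1) × Fin n → ℝ) :
    l1norm (fun p : Fin (T+1) × Fin n => v (p.1 + 1, p.2)) = l1norm v :=
  ((Equiv.addRight 1).prodCongr (Equiv.refl _)).sum_comp fun p => |v p|

lemma l1norm_mulVec_le_of_head_eq_zero {ι : Type*} [Fintype ι]
    (M : Matrix ι (Fin (T+1) × Fin n) ℝ) (v : Fin (T+1) × Fin n → ℝ) (hv : ∀ j, v (0, j) = 0) :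
    l1norm (M *ᵥ v) ≤ matL1 (M * dshift T n) * l1norm v := by
  conv_lhs => rw [← dshift_mulVec_shift v hv, mulVec_mulVec]
  rw [← l1norm_comp_shift v]
  exact l1norm_mulVec_le _ _

end Shift

section Nilpotent
variable {ι : Type*} [Fintype ι] [DecidableEq ι] {R : Type*} [Semiring R]

lemma pow_apply_eq_zero_of_le_imp_eq_zero (τ : ι → ℕ) {M : Matrix ι ι R}
    (hM : ∀ i j, τ i ≤ τ j → M i j = 0) (k : ℕ) (i j : ι) (h : τ i < τ j + k) :
    (M ^ k) i j = 0 := by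
  induction k generalizing j with
  | zero => exact one_apply_ne fun hij => by subst hij; omega
  | succ k ih =>
    rw [pow_succ, mul_apply]
    refine Finset.sum_eq_zero fun l _ => ?_
    rcases lt_or_ge (τ j) (τ l) with hl | hl
    · rw [ih l (by omega), zero_mul]
    · rw [hM l j hl, mul_zero]

lemma isNilpotent_of_le_imp_eq_zero (τ : ι → ℕ) {M : Matrix ι ι R}
    (hM : ∀ i j, τ i ≤ τ j → M i j = 0) : IsNilpotent M :=
  ⟨Finset.univ.sup τ + 1, ext fun i j => pow_apply_eq_zero_of_le_imp_eq_zero τ hM _ i j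
    (by have := Finset.le_sup (f := τ) (Finset.mem_univ i); omega)⟩

end Nilpotent

section Causal
variable {T n : ℕ} {ι κ : Type*}

lemma mul_dshift_mul_apply_eq_zero (τ : ι → ℕ) (σ : κ → ℕ)
    {M : Matrix ι (Fin (T+1) × Fin n) ℝ} {D : Matrix (Fin (T+1) × Fin n) κ ℝ}
    (hM : ∀ p r, τ p < r.1 → M p r = 0) (hD : ∀ s q, (s.1 : ℕ) ≠ σ q → D s q = 0)
    {p : ι} {q : κ} (h : τ p ≤ σ q) : (M * dshift T n * D) p q = 0 := by
  rw [mul_apply]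
  refine Finset.sum_eq_zero fun s _ => ?_
  by_cases hs : (s.1 : ℕ) = σ q
  · rw [mul_apply, Finset.sum_eq_zero, zero_mul]
    intro r _
    by_cases hrs : (r.1 : ℕ) = s.1 + 1 ∧ r.2 = s.2
    · rw [hM p r (by omega), zero_mul]
    · rw [dshift, if_neg hrs, mul_zero]
  · rw [hD s q hs, mul_zero]

end Causal

lemma mulVec_sub_mulVec_eq_of_mul_one_add_eq_one {α β 𝕜 : Type*} [Fintype α] [Fintype β]
    [DecidableEq α] [CommRing 𝕜] {Φ : Matrix α β 𝕜} {K : Matrix β α 𝕜} {R : Matrix α α 𝕜}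
    (hR : R * (1 + Φ * K) = 1) (v : β → 𝕜) (s : α → 𝕜) :
    Φ *ᵥ v - (R * Φ) *ᵥ (v + K *ᵥ s) = (R * Φ * K) *ᵥ (Φ *ᵥ v - s) := by
  have hΦ : R * Φ + R * Φ * K * Φ = Φ :=
    calc R * Φ + R * Φ * K * Φ = R * (1 + Φ * K) * Φ := by
          simp only [Matrix.mul_add, Matrix.add_mul, Matrix.mul_one, Matrix.mul_assoc]
      _ = Φ := by rw [hR, Matrix.one_mul]
  nth_rewrite 1 [← hΦ]
  simp only [add_mulVec, mulVec_add, mulVec_sub, mulVec_mulVec]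
  abel

section ClosedLoop
variable {n m T : ℕ}

def stackTime : (Fin (T+1) × Fin n) ⊕ (Fin (T+1) × Fin m) → ℕ :=
  Sum.elim (fun p => p.1) (fun p => p.1)

lemma blkdiag_sub (M M' : Matrix (Fin n) (Fin m) ℝ) :
    blkdiag T (M - M') = blkdiag T M - blkdiag T M' := by
  ext p q
  by_cases h : p.1 = q.1 <;> simp [blkdiag, h]

lemma fromRows_apply_eq_zero {Φx : Matrix (Fin (T+1) × Fin n) (Fin (T+1) × Fin n) ℝ}
    {Φu : Matrix (Fin (T+1) × Fin m) (Fin (T+1) × Fin n) ℝ} (hx : BlockLT Φx) (hu : BlockLT Φu)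
    (p : (Fin (T+1) × Fin n) ⊕ (Fin (T+1) × Fin m)) (r : Fin (T+1) × Fin n)
    (h : stackTime p < r.1) : fromRows Φx Φu p r = 0 := by
  rcases p with p | p
  · exact hx p r h
  · exact hu p r h

lemma fromCols_blkdiag_apply_eq_zero (A' : Matrix (Fin n) (Fin n) ℝ) (B' : Matrix (Fin n) (Fin m) ℝ)
    (s : Fin (T+1) × Fin n) (q : (Fin (T+1) × Fin n) ⊕ (Fin (T+1) × Fin m))
    (h : (s.1 : ℕ) ≠ stackTime q) : fromCols (blkdiag T A') (blkdiag T B') s q = 0 := by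
  rcases q with q | q <;> exact if_neg fun hsq => h (congrArg Fin.val hsq)

lemma isUnit_one_add_fromRows_mul_dshift_mul_fromCols
    {Φx : Matrix (Fin (T+1) × Fin n) (Fin (T+1) × Fin n) ℝ}
    {Φu : Matrix (Fin (T+1) × Fin m) (Fin (T+1) × Fin n) ℝ} (hx : BlockLT Φx) (hu : BlockLT Φu)
    (A' : Matrix (Fin n) (Fin n) ℝ) (B' : Matrix (Fin n) (Fin m) ℝ) :
    IsUnit (1 + fromRows Φx Φu * dshift T n * fromCols (blkdiag T A') (blkdiag T B')) :=
  IsNilpotent.isUnit_one_add <| isNilpotent_of_le_imp_eq_zero stackTime fun _ _ =>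
    mul_dshift_mul_apply_eq_zero stackTime stackTime (fromRows_apply_eq_zero hx hu)
      (fromCols_blkdiag_apply_eq_zero A' B')

lemma sub_dshift_mulVec_eq_add (A Ahat : Matrix (Fin n) (Fin n) ℝ)
    (B Bhat : Matrix (Fin n) (Fin m) ℝ)
    (x : Fin (T+1) × Fin n → ℝ) (u : Fin (T+1) × Fin m → ℝ) :
    x - (dshift T n * blkdiag T A) *ᵥ x - (dshift T n * blkdiag T B) *ᵥ u
      = (x - (dshift T n * blkdiag T Ahat) *ᵥ x - (dshift T n * blkdiag T Bhat) *ᵥ u)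
        + (dshift T n * fromCols (blkdiag T (Ahat - A)) (blkdiag T (Bhat - B)))
          *ᵥ Sum.elim x u := by
  rw [← mulVec_mulVec (Sum.elim x u), fromCols_mulVec_sumElim, blkdiag_sub, blkdiag_sub]
  simp only [mulVec_add, sub_mulVec, mulVec_sub, mulVec_mulVec]
  abel

end ClosedLoop

open scoped ProbabilityTheory

section EmpMix
variable {α β : Type*} [MeasurableSpace α] [MeasurableSpace β] {N : ℕ}

noncomputable def empMix (a : Fin N → α) (ν : Fin N → Measure β) : Measure (α × β) :=
  (N : ℝ≥0∞)⁻¹ • ∑ i, (Measure.dirac (a i)).prod (ν i)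

lemma map_fst_empMix {ι : Type*} [Fintype ι] (a : Fin N → ι → ℝ) (ν : Fin N → Measure β)
    [∀ i, IsProbabilityMeasure (ν i)] : (empMix a ν).map Prod.fst = emp a := by
  ext s hs
  simp [empMix, emp, Measure.map_apply measurable_fst hs, Measure.finsetSum_apply,
    ← Set.prod_univ, Measure.prod_prod]

lemma map_snd_empMix (a : Fin N → α) (ν : Fin N → Measure β) [∀ i, SFinite (ν i)] :
    (empMix a ν).map Prod.snd = (N : ℝ≥0∞)⁻¹ • ∑ i, ν i := by
  ext s hs
  simp [empMix, Measure.map_apply measurable_snd hs, Measure.finsetSum_apply,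
    ← Set.univ_prod, Measure.prod_prod]

lemma integral_empMix (a : Fin N → α) (ν : Fin N → Measure β) [∀ i, SFinite (ν i)]
    {f : α × β → ℝ} (hf : Measurable f) (hfi : ∀ i, Integrable (fun y => f (a i, y)) (ν i)) :
    ∫ p, f p ∂(empMix a ν) = (N : ℝ)⁻¹ * ∑ i, ∫ y, f (a i, y) ∂(ν i) := by
  have hint : ∀ i, Integrable f ((Measure.dirac (a i)).prod (ν i)) := fun i => by
    rw [Measure.dirac_prod, integrable_map_measure hf.aestronglyMeasurable (by fun_prop)]
    exact hfi i
  rw [empMix, integral_smul_measure, integral_finsetSum_measure fun i _ => hint i]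
  simp only [Measure.dirac_prod, ENNReal.toReal_inv, ENNReal.toReal_natCast, smul_eq_mul]
  congr 2 with i
  exact integral_map measurable_prodMk_left.aemeasurable hf.aestronglyMeasurable

lemma isProbabilityMeasure_emp {ι : Type*} [Fintype ι] (hN : 0 < N) (a : Fin N → ι → ℝ) :
    IsProbabilityMeasure (emp a) := by
  constructor
  simp [emp, Measure.finsetSum_apply, ENNReal.inv_mul_cancel, hN.ne']

lemma isProbabilityMeasure_empMix {ι : Type*} [Fintype ι] (hN : 0 < N)
    (a : Fin N → ι → ℝ) (ν : Fin N → Measure β) [∀ i, IsProbabilityMeasure (ν i)] :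
    IsProbabilityMeasure (empMix a ν) := by
  have := isProbabilityMeasure_emp hN a
  rw [← map_fst_empMix a ν] at this
  exact Measure.isProbabilityMeasure_of_map Prod.fst

lemma exists_eq_empMix {ι : Type*} [Fintype ι] [StandardBorelSpace β] [Nonempty β]
    (a : Fin N → ι → ℝ) (π : Measure ((ι → ℝ) × β)) [IsFiniteMeasure π]
    (hπ : π.map Prod.fst = emp a) :
    ∃ ν : Fin N → Measure β, (∀ i, IsProbabilityMeasure (ν i)) ∧ π = empMix a ν := by
  refine ⟨fun i => π.condKernel (a i), fun _ => inferInstance, ?_⟩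
  have hdirac (x : ι → ℝ) :
      Measure.dirac x ⊗ₘ π.condKernel = (Measure.dirac x).prod (π.condKernel x) := by
    ext s hs
    rw [Measure.dirac_compProd_apply hs, Measure.dirac_prod,
      Measure.map_apply measurable_prodMk_left hs]
  conv_lhs => rw [← π.disintegrate π.condKernel]
  rw [Measure.fst, hπ, emp, Measure.compProd_smul_left, ← Measure.sum_fintype,
    Measure.compProd_sum_left, Measure.sum_fintype, empMix]
  simp only [hdirac]

end EmpMix

section Wasserstein
variable {ι : Type*} [Fintype ι]

lemma wass_le_integral {P Q : Measure (ι → ℝ)} (π : Measure ((ι → ℝ) × (ι → ℝ)))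
    [IsProbabilityMeasure π] (h₁ : π.map Prod.fst = P) (h₂ : π.map Prod.snd = Q) :
    wass P Q ≤ ∫ p, l1norm (p.1 - p.2) ∂π := by
  refine csInf_le ⟨0, ?_⟩ ⟨π, inferInstance, h₁, h₂, rfl⟩
  rintro _ ⟨π', -, -, -, rfl⟩
  exact integral_nonneg fun _ => l1norm_nonneg _

lemma le_add_mul_wass {P Q : Measure (ι → ℝ)} [IsProbabilityMeasure P] [IsProbabilityMeasure Q]
    {a d c : ℝ} (hc : 0 ≤ c)
    (h : ∀ π : Measure ((ι → ℝ) × (ι → ℝ)), IsProbabilityMeasure π → π.map Prod.fst = P →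
      π.map Prod.snd = Q → a ≤ d + c * ∫ p, l1norm (p.1 - p.2) ∂π) :
    a ≤ d + c * wass P Q := by
  rw [wass, ← smul_eq_mul, ← Real.sInf_smul_of_nonneg hc, ← sub_le_iff_le_add']
  refine le_csInf ⟨_, _, ⟨P.prod Q, inferInstance, by simp, by simp, rfl⟩, rfl⟩ ?_
  rintro _ ⟨_, ⟨π, hπ, h₁, h₂, rfl⟩, rfl⟩
  rw [sub_le_iff_le_add']
  exact h π hπ h₁ h₂

end Wasserstein

section Transport
variable {ι κ : Type*} [Fintype ι] [Fintype κ] {N : ℕ}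

lemma integral_le_add_mul_integral {X : Type*} [MeasurableSpace X] {μ : Measure X}
    [IsProbabilityMeasure μ] {f h : X → ℝ} {a c : ℝ} (hf : 0 ≤ f) (hh : Integrable h μ)
    (hfh : ∀ᵐ y ∂μ, f y ≤ a + c * h y) : ∫ y, f y ∂μ ≤ a + c * ∫ y, h y ∂μ :=
  calc ∫ y, f y ∂μ ≤ ∫ y, (a + c * h y) ∂μ :=
        integral_mono_of_nonneg (.of_forall hf) ((integrable_const _).add (hh.const_mul c)) hfh
    _ = a + c * ∫ y, h y ∂μ := by
        rw [integral_add (integrable_const _) (hh.const_mul c), integral_const, integral_const_mul]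
        simp

/-- A coupling of `emp w` and `P` is turned into one of `emp b` and `P.map g` by moving the mass
at `(w i, y)` to `(b i, g y)`. -/
lemma wass_emp_map_le (hN : 0 < N) {g : (ι → ℝ) → κ → ℝ} (hg : Measurable g)
    (P : Measure (ι → ℝ)) [IsProbabilityMeasure P] (hP : Integrable l1norm P)
    (w : Fin N → ι → ℝ) (b : Fin N → κ → ℝ) (e : Fin N → ℝ) {c : ℝ} (hc : 0 ≤ c)
    (h : ∀ i, ∀ᵐ y ∂P, l1norm (b i - g y) ≤ e i + c * l1norm (w i - y)) :
    wass (emp b) (P.map g) ≤ (N : ℝ)⁻¹ * ∑ i, e i + c * wass (emp w) P := by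
  have := isProbabilityMeasure_emp hN w
  refine le_add_mul_wass hc fun π _ h₁ h₂ => ?_
  obtain ⟨ν, hν, rfl⟩ := exists_eq_empMix w π h₁
  have hP_eq : P = (N : ℝ≥0∞)⁻¹ • ∑ i, ν i := h₂ ▸ map_snd_empMix w ν
  have hνP (i : Fin N) : ν i ≤ (N : ℝ≥0∞) • P := by
    rw [hP_eq, smul_smul, ENNReal.mul_inv_cancel (by exact_mod_cast hN.ne') (by simp), one_smul]
    exact Finset.single_le_sum (f := ν) (fun _ _ => Measure.zero_le _) (Finset.mem_univ i)
  have hw_int (i : Fin N) : Integrable (fun y => l1norm (w i - y)) (ν i) :=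
    integrable_l1norm_const_sub ((hP.smul_measure (by simp)).mono_measure (hνP i)) _
  have hνae (i : Fin N) : ∀ᵐ y ∂(ν i), l1norm (b i - g y) ≤ e i + c * l1norm (w i - y) :=
    (Measure.absolutelyContinuous_of_le_smul (hνP i)).ae_le (h i)
  have hb_int (i : Fin N) : Integrable (fun y => l1norm (b i - g y)) (ν i) :=
    ((integrable_const (e i)).add ((hw_int i).const_mul c)).mono'
      (by fun_prop) ((hνae i).mono fun y hy => by rwa [Real.norm_of_nonneg (l1norm_nonneg _)])
  have (i : Fin N) : IsProbabilityMeasure ((ν i).map g) :=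
    Measure.isProbabilityMeasure_map hg.aemeasurable
  have := isProbabilityMeasure_empMix hN b fun i => (ν i).map g
  have hdist (v : κ → ℝ) : Continuous fun y => l1norm (v - y) := by fun_prop
  have hcost : Measurable fun p : (κ → ℝ) × (κ → ℝ) => l1norm (p.1 - p.2) := by fun_prop
  calc wass (emp b) (P.map g)
      ≤ ∫ p, l1norm (p.1 - p.2) ∂(empMix b fun i => (ν i).map g) := by
        refine wass_le_integral _ (map_fst_empMix _ _) ?_
        ext s hs
        simp [map_snd_empMix, hP_eq, Measure.map_apply hg hs, Measure.finsetSum_apply]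
    _ = (N : ℝ)⁻¹ * ∑ i, ∫ y, l1norm (b i - g y) ∂(ν i) := by
        rw [integral_empMix _ _ hcost fun i =>
          (integrable_map_measure (hdist _).aestronglyMeasurable hg.aemeasurable).2 (hb_int i)]
        simp only [integral_map hg.aemeasurable (hdist _).aestronglyMeasurable]
    _ ≤ (N : ℝ)⁻¹ * ∑ i, (e i + c * ∫ y, l1norm (w i - y) ∂(ν i)) := by
        gcongr with i
        exact integral_le_add_mul_integral (fun _ => l1norm_nonneg _) (hw_int i) (hνae i)
    _ = (N : ℝ)⁻¹ * ∑ i, e i + c * ∫ p, l1norm (p.1 - p.2) ∂(empMix w ν) := by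
        rw [integral_empMix _ _ (by fun_prop) hw_int, Finset.sum_add_distrib, ← Finset.mul_sum]
        ring

end Transport

theorem stmt9_general {n m T N : ℕ} (hN : 0 < N)
    (Ahat A : Matrix (Fin n) (Fin n) ℝ) (Bhat B : Matrix (Fin n) (Fin m) ℝ)
    (Φx : Matrix (Fin (T+1) × Fin n) (Fin (T+1) × Fin n) ℝ)
    (Φu : Matrix (Fin (T+1) × Fin m) (Fin (T+1) × Fin n) ℝ)
    (hx : BlockLT Φx) (hu : BlockLT Φu)
    (Φ : Matrix ((Fin (T+1) × Fin n) ⊕ (Fin (T+1) × Fin m)) (Fin (T+1) × Fin n) ℝ)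
    (hΦ : Φ = Matrix.fromRows Φx Φu)
    (ΔM : Matrix (Fin (T+1) × Fin n) ((Fin (T+1) × Fin n) ⊕ (Fin (T+1) × Fin m)) ℝ)
    (hΔM : ΔM = Matrix.fromCols (blkdiag T (Ahat - A)) (blkdiag T (Bhat - B)))
    (RΦ : Matrix ((Fin (T+1) × Fin n) ⊕ (Fin (T+1) × Fin m))
                 ((Fin (T+1) × Fin n) ⊕ (Fin (T+1) × Fin m)) ℝ)
    (hR : RΦ = (1 + Φ * dshift T n * ΔM)⁻¹)
    (x0 : Fin n → ℝ)
    (Pw : Measure ((Fin (T+1) × Fin n) → ℝ)) [IsProbabilityMeasure Pw]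
    (hPwmom : Integrable (fun v => l1norm v) Pw)
    (hPwsupp : ∀ᵐ v ∂Pw, ∀ j, v (0, j) = x0 j)
    (x : Fin N → (Fin (T+1) × Fin n) → ℝ) (u : Fin N → (Fin (T+1) × Fin m) → ℝ)
    (w what : Fin N → (Fin (T+1) × Fin n) → ℝ)
    (hw : ∀ i, w i = x i - (dshift T n * blkdiag T A) *ᵥ x i
        - (dshift T n * blkdiag T B) *ᵥ u i)
    (hwhat : ∀ i, what i = x i - (dshift T n * blkdiag T Ahat) *ᵥ x i
        - (dshift T n * blkdiag T Bhat) *ᵥ u i)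
    (hw0 : ∀ i j, w i (0, j) = x0 j) :
    wass (emp (fun i => Φ *ᵥ what i)) (Pw.map (fun v => (RΦ * Φ) *ᵥ v))
      ≤ (N : ℝ)⁻¹ * ∑ i, l1norm
            ((RΦ * Φ * dshift T n * ΔM) *ᵥ (Φ *ᵥ what i - Sum.elim (x i) (u i)))
        + matL1 (RΦ * Φ * dshift T n) * wass (emp w) Pw := by
  have hRΦ : RΦ * (1 + Φ * (dshift T n * ΔM)) = 1 := by
    rw [hR, ← Matrix.mul_assoc]
    refine nonsing_inv_mul _ ((isUnit_iff_isUnit_det _).1 ?_)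
    rw [hΦ, hΔM]
    exact isUnit_one_add_fromRows_mul_dshift_mul_fromCols hx hu _ _
  have hw_eq (i : Fin N) : w i = what i + (dshift T n * ΔM) *ᵥ Sum.elim (x i) (u i) := by
    rw [hw, hwhat, hΔM, sub_dshift_mulVec_eq_add A Ahat B Bhat]
  refine wass_emp_map_le hN (by fun_prop) Pw hPwmom w _ _ (matL1_nonneg _) fun i => ?_
  filter_upwards [hPwsupp] with y hy
  have hsplit : Φ *ᵥ what i - (RΦ * Φ) *ᵥ y = (RΦ * Φ * dshift T n * ΔM) *ᵥ
      (Φ *ᵥ what i - Sum.elim (x i) (u i)) + (RΦ * Φ) *ᵥ (w i - y) := by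
    rw [Matrix.mul_assoc (RΦ * Φ), ← mulVec_sub_mulVec_eq_of_mul_one_add_eq_one hRΦ,
      ← hw_eq, mulVec_sub]
    abel
  rw [hsplit]
  exact (l1norm_add_le _ _).trans <| add_le_add le_rfl <|
    l1norm_mulVec_le_of_head_eq_zero _ _ fun j => by simp [hw0, hy]

/-- **Theorem 1, distribution shift.** The Wasserstein distance between the
empirical predictive distribution and the true closed-loop distribution is bounded by a
model-mismatch term plus a disturbance-distribution-uncertainty term. -/
theorem stmt9 {n m T N : ℕ} (hn : 0 < n) (hm : 0 < m) (hT : 0 < T) (hN : 0 < N)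
    (Ahat A : Matrix (Fin n) (Fin n) ℝ) (Bhat B : Matrix (Fin n) (Fin m) ℝ)
    (Φx : Matrix (Fin (T+1) × Fin n) (Fin (T+1) × Fin n) ℝ)
    (Φu : Matrix (Fin (T+1) × Fin m) (Fin (T+1) × Fin n) ℝ)
    (hx : BlockLT Φx) (hu : BlockLT Φu)
    (hSLS : (1 - dshift T n * blkdiag T Ahat) * Φx - dshift T n * blkdiag T Bhat * Φu = 1)
    (Φ : Matrix ((Fin (T+1) × Fin n) ⊕ (Fin (T+1) × Fin m)) (Fin (T+1) × Fin n) ℝ)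
    (hΦ : Φ = Matrix.fromRows Φx Φu)
    (ΔM : Matrix (Fin (T+1) × Fin n) ((Fin (T+1) × Fin n) ⊕ (Fin (T+1) × Fin m)) ℝ)
    (hΔM : ΔM = Matrix.fromCols (blkdiag T (Ahat - A)) (blkdiag T (Bhat - B)))
    (RΦ : Matrix ((Fin (T+1) × Fin n) ⊕ (Fin (T+1) × Fin m))
                 ((Fin (T+1) × Fin n) ⊕ (Fin (T+1) × Fin m)) ℝ)
    (hR : RΦ = (1 + Φ * dshift T n * ΔM)⁻¹)
    (x0 : Fin n → ℝ)
    (Pw : Measure ((Fin (T+1) × Fin n) → ℝ)) [IsProbabilityMeasure Pw]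
    (hPwmom : Integrable (fun v => l1norm v) Pw)
    (hPwsupp : ∀ᵐ v ∂Pw, ∀ j, v (0, j) = x0 j)
    (x : Fin N → (Fin (T+1) × Fin n) → ℝ) (u : Fin N → (Fin (T+1) × Fin m) → ℝ)
    (w what : Fin N → (Fin (T+1) × Fin n) → ℝ)
    (hw : ∀ i, w i = x i - (dshift T n * blkdiag T A) *ᵥ x i
        - (dshift T n * blkdiag T B) *ᵥ u i)
    (hwhat : ∀ i, what i = x i - (dshift T n * blkdiag T Ahat) *ᵥ x i
        - (dshift T n * blkdiag T Bhat) *ᵥ u i)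
    (hw0 : ∀ i j, w i (0, j) = x0 j) :
    wass (emp (fun i => Φ *ᵥ what i)) (Pw.map (fun v => (RΦ * Φ) *ᵥ v))
      ≤ (N : ℝ)⁻¹ * ∑ i, l1norm
            ((RΦ * Φ * dshift T n * ΔM) *ᵥ (Φ *ᵥ what i - Sum.elim (x i) (u i)))
        + matL1 (RΦ * Φ * dshift T n) * wass (emp w) Pw :=
  stmt9_general hN Ahat A Bhat B Φx Φu hx hu Φ hΦ ΔM hΔM RΦ hR x0 Pw hPwmom hPwsupp x u w what hw
    hwhat hw0
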